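/- Let G be a Borel probability measure on ℝ × ℝ^p with finite second moments, w₀ = (y₀, x₀) ∈ ℝ × ℝ^p, and G_ε = (1 − ε)G + ε δ_{w₀} for ε ∈ [0, 1). Let S₁, …, S_H be disjoint Borel subsets of ℝ with w_h = G(S_h × ℝ^p) > 0, and suppose y₀ ∈ S_{h₀} for exactly one index h₀. For each h assume Σ_h = Var_G(X | Y ∈ S_h) is invertible and set b_h = Σ_h⁻¹ Cov_G(X, Y | Y ∈ S_h), μ_h the conditional mean of X and μ_{y,h} the conditional mean of Y given {Y ∈ S_h} under G. Then the map ε ↦ Σ_{h=1}^{H} w_h b_h(ε) b_h(ε)ᵀ, where b_h(ε) = [Var_{G_ε}(X | Y ∈ S_h)]⁻¹ Cov_{G_ε}(X, Y | Y ∈ S_h), is right-differentiable at ε = 0 with derivative r₀ [ Σ_{h₀}⁻¹ (x₀ − μ_{h₀}) b_{h₀}ᵀ + b_{h₀} (x₀ − μ_{h₀})ᵀ Σ_{h₀}⁻¹ ], where r₀ = y₀ − μ_{y,h₀} − b_{h₀}ᵀ(x₀ − μ_{h₀}). -/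

import Mathlib

/-!
Conditioning `G_ε` on a slice that misses `y₀` returns `G(· | S_h)`, so only the slice `h₀`
moves. There, conditioning gives the contamination of `Q = G(· | S_{h₀})` by `δ_{w₀}` with
weight `τ(ε) = ε / ((1 - ε) w_{h₀} + ε)`. Under a `τ`-contamination of `Q` the covariance of `X`
becomes `(1 - τ)(Σ + τ d dᵀ)` and the cross-covariance `(1 - τ)(C + τ (y₀ - μ_y) d)`, where
`d = x₀ - μ_{h₀}`; Sherman–Morrison then gives, exactly and for all small `ε`,
`b_{h₀}(ε) = b_{h₀} + τ r₀ / (1 + τ dᵀ Σ⁻¹ d) · Σ⁻¹ d`. Since `τ'(0) = 1 / w_{h₀}`, the weight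
`w_{h₀}` cancels in the derivative of `w_{h₀} b_{h₀}(ε) b_{h₀}(ε)ᵀ`.
-/

open MeasureTheory ProbabilityTheory Matrix Filter Topology Function

namespace Matrix
variable {n K : Type*} [Fintype n] [DecidableEq n] [Field K]

theorem inv_smul_mulVec_smul {c : K} (hc : c ≠ 0) (A : Matrix n n K) (x : n → K) :
    (c • A)⁻¹ *ᵥ (c • x) = A⁻¹ *ᵥ x := by
  by_cases hA : IsUnit A.det
  · rw [inv_eq_right_inv (B := c⁻¹ • A⁻¹) (by simp [hc, mul_nonsing_inv _ hA]), smul_mulVec,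
      mulVec_smul, smul_smul, inv_mul_cancel₀ hc, one_smul]
  · have hcA : ¬ IsUnit (c • A).det := by
      rw [det_smul, IsUnit.mul_iff]
      exact fun h => hA h.2
    rw [nonsing_inv_apply_not_isUnit _ hA, nonsing_inv_apply_not_isUnit _ hcA]
    simp

/-- The Sherman–Morrison formula. -/
theorem inv_add_vecMulVec {A : Matrix n n K} (hA : IsUnit A.det) (u v : n → K)
    (h : 1 + v ⬝ᵥ (A⁻¹ *ᵥ u) ≠ 0) :
    (A + vecMulVec u v)⁻¹ = A⁻¹ - (1 + v ⬝ᵥ (A⁻¹ *ᵥ u))⁻¹ • (A⁻¹ * vecMulVec u v * A⁻¹) := by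
  apply inv_eq_right_inv
  have hDAD : vecMulVec u v * (A⁻¹ * vecMulVec u v) = (v ⬝ᵥ (A⁻¹ *ᵥ u)) • vecMulVec u v := by
    rw [← Matrix.mul_assoc, vecMulVec_mul, vecMulVec_mul_vecMulVec, vecMulVec_smul,
      dotProduct_mulVec]
  rw [Matrix.add_mul, Matrix.mul_sub, Matrix.mul_sub, Matrix.mul_smul, Matrix.mul_smul,
    mul_nonsing_inv _ hA, ← Matrix.mul_assoc, ← Matrix.mul_assoc, mul_nonsing_inv _ hA,
    Matrix.one_mul, ← Matrix.mul_assoc (vecMulVec u v), hDAD, Matrix.smul_mul, smul_smul]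
  match_scalars
  · ring
  · field_simp
    ring

theorem inv_add_vecMulVec_mulVec {A : Matrix n n K} (hA : IsUnit A.det) (u v x : n → K)
    (h : 1 + v ⬝ᵥ (A⁻¹ *ᵥ u) ≠ 0) :
    (A + vecMulVec u v)⁻¹ *ᵥ x
      = A⁻¹ *ᵥ x - ((v ⬝ᵥ (A⁻¹ *ᵥ x)) / (1 + v ⬝ᵥ (A⁻¹ *ᵥ u))) • (A⁻¹ *ᵥ u) := by
  rw [inv_add_vecMulVec hA u v h, sub_mulVec, smul_mulVec, ← mulVec_mulVec, ← mulVec_mulVec,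
    vecMulVec_mulVec, op_smul_eq_smul, mulVec_smul, smul_smul, div_eq_inv_mul]

end Matrix

section Covariance
variable {Ω : Type*} [MeasurableSpace Ω] {μ : Measure Ω} {X Y : Ω → ℝ}

lemma integral_sub_mul_sub_eq_covariance_add [IsProbabilityMeasure μ] (hX : MemLp X 2 μ)
    (hY : MemLp Y 2 μ) (a c : ℝ) :
    ∫ ω, (X ω - a) * (Y ω - c) ∂μ = cov[X, Y; μ] + (μ[X] - a) * (μ[Y] - c) := by
  have hcov := covariance_eq_sub (X := fun ω => X ω - a) (Y := fun ω => Y ω - c)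
    (hX.sub (memLp_const a)) (hY.sub (memLp_const c))
  rw [covariance_sub_const_left (hX.integrable one_le_two),
    covariance_sub_const_right (hY.integrable one_le_two)] at hcov
  rw [hcov, integral_sub (hX.integrable one_le_two) (integrable_const a),
    integral_sub (hY.integrable one_le_two) (integrable_const c)]
  simp

lemma MeasureTheory.MemLp.cond {p : ENNReal} {s : Set Ω} (hX : MemLp X p μ) :
    MemLp X p (μ[|s]) := by
  by_cases hs : μ s = 0
  · simp [cond_eq_zero_of_meas_eq_zero hs]
  · exact (hX.restrict s).smul_measure (ENNReal.inv_ne_top.2 hs)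

end Covariance

noncomputable def contamination {α : Type*} [MeasurableSpace α] (μ : Measure α) (a : α)
    (t : ℝ) : Measure α :=
  ENNReal.ofReal (1 - t) • μ + ENNReal.ofReal t • Measure.dirac a

/-- The weight of `δ_a` in `(contamination μ a t)[|s]` when `a ∈ s` and `μ s = w`. -/
noncomputable def condWeight (w t : ℝ) : ℝ := t / ((1 - t) * w + t)

section CondWeight
variable {w t : ℝ}

lemma one_sub_mul_add_pos (hw : 0 < w) (ht0 : 0 ≤ t) (ht1 : t ≤ 1) : 0 < (1 - t) * w + t := by
  rcases ht0.eq_or_lt with rfl | ht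
  · simpa using hw
  · nlinarith [mul_nonneg (sub_nonneg.2 ht1) hw.le]

lemma condWeight_nonneg (hw : 0 < w) (ht0 : 0 ≤ t) (ht1 : t ≤ 1) : 0 ≤ condWeight w t :=
  div_nonneg ht0 (one_sub_mul_add_pos hw ht0 ht1).le

lemma condWeight_lt_one (hw : 0 < w) (ht0 : 0 ≤ t) (ht1 : t < 1) : condWeight w t < 1 := by
  rw [condWeight, div_lt_one (one_sub_mul_add_pos hw ht0 ht1.le)]
  nlinarith [mul_pos (sub_pos.2 ht1) hw]

@[simp] lemma condWeight_zero : condWeight w 0 = 0 := by simp [condWeight]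

lemma hasDerivAt_condWeight (hw : w ≠ 0) : HasDerivAt (condWeight w) (1 / w) 0 := by
  have hden : HasDerivAt (fun t : ℝ => (1 - t) * w + t) (1 - w) 0 :=
    ((((hasDerivAt_id' 0).const_sub 1).mul_const w).add (hasDerivAt_id' 0)).congr_deriv
      (by ring)
  exact ((hasDerivAt_id' 0).div hden (by simpa using hw)).congr_deriv (by simp; field_simp)

lemma hasDerivAt_condWeight_mul_div (hw : w ≠ 0) (r q : ℝ) :
    HasDerivAt (fun t => condWeight w t * r / (1 + condWeight w t * q)) (r / w) 0 := by
  have hg : HasDerivAt (fun c => c * r / (1 + c * q)) r (condWeight w 0) := by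
    rw [condWeight_zero]
    exact (((hasDerivAt_id' 0).mul_const r).div
      (((hasDerivAt_id' 0).mul_const q).const_add 1) (by simp)).congr_deriv (by simp)
  exact (hg.comp 0 (hasDerivAt_condWeight hw)).congr_deriv (by ring)

end CondWeight

section Contamination
variable {α : Type*} [MeasurableSpace α] {μ : Measure α} {a : α} {s : Set α} {t : ℝ}

lemma cond_contamination_of_notMem (hs : MeasurableSet s) (ha : a ∉ s) (ht : t < 1) :
    (contamination μ a t)[|s] = μ[|s] := by
  classical
  have hne : ENNReal.ofReal (1 - t) ≠ 0 := by simpa using ht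
  rw [ProbabilityTheory.cond, ProbabilityTheory.cond, contamination, Measure.restrict_add,
    Measure.restrict_smul, Measure.restrict_smul, restrict_dirac' hs, if_neg ha, smul_zero,
    add_zero, Measure.add_apply, Measure.smul_apply, Measure.smul_apply,
    Measure.dirac_apply' a hs, Set.indicator_of_notMem ha, smul_zero, add_zero, smul_eq_mul,
    ENNReal.mul_inv (Or.inl hne) (Or.inl ENNReal.ofReal_ne_top), smul_smul,
    mul_right_comm, ENNReal.inv_mul_cancel hne ENNReal.ofReal_ne_top, one_mul]

lemma cond_contamination_of_mem [IsFiniteMeasure μ] (hs : MeasurableSet s) (ha : a ∈ s)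
    (hμs : μ s ≠ 0) (ht0 : 0 ≤ t) (ht1 : t ≤ 1) :
    (contamination μ a t)[|s] = contamination (μ[|s]) a (condWeight (μ.real s) t) := by
  classical
  have hw : 0 < μ.real s := ENNReal.toReal_pos hμs (measure_ne_top μ s)
  have hg := one_sub_mul_add_pos hw ht0 ht1
  have hτ1 : condWeight (μ.real s) t ≤ 1 :=
    div_le_one_of_le₀ (by nlinarith [mul_nonneg (sub_nonneg.2 ht1) hw.le]) hg.le
  have hmass : contamination μ a t s = ENNReal.ofReal ((1 - t) * μ.real s + t) := by
    rw [contamination, Measure.add_apply, Measure.smul_apply, Measure.smul_apply,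
      Measure.dirac_apply_of_mem ha, ← ofReal_measureReal (measure_ne_top μ s), smul_eq_mul,
      smul_eq_mul, mul_one, ← ENNReal.ofReal_mul (by linarith),
      ← ENNReal.ofReal_add (by nlinarith) ht0]
  rw [ProbabilityTheory.cond, ProbabilityTheory.cond, hmass, contamination, contamination,
    Measure.restrict_add, Measure.restrict_smul, Measure.restrict_smul, restrict_dirac' hs,
    if_pos ha, smul_add, smul_smul, smul_smul, smul_smul,
    ← ofReal_measureReal (measure_ne_top μ s), ← ENNReal.ofReal_inv_of_pos hg,
    ← ENNReal.ofReal_inv_of_pos hw, ← ENNReal.ofReal_mul (by positivity),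
    ← ENNReal.ofReal_mul (by positivity),
    ← ENNReal.ofReal_mul (sub_nonneg.2 hτ1), condWeight]
  congr 3 <;> field_simp
  ring

lemma integral_contamination [MeasurableSingletonClass α] (ht0 : 0 ≤ t) (ht1 : t ≤ 1)
    {f : α → ℝ} (hf : Integrable f μ) :
    ∫ x, f x ∂(contamination μ a t) = (1 - t) * ∫ x, f x ∂μ + t * f a := by
  rw [contamination, integral_add_measure (hf.smul_measure ENNReal.ofReal_ne_top)
      ((integrable_dirac enorm_lt_top).smul_measure ENNReal.ofReal_ne_top),
    integral_smul_measure, integral_smul_measure, integral_dirac,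
    ENNReal.toReal_ofReal (by linarith), ENNReal.toReal_ofReal ht0, smul_eq_mul, smul_eq_mul]

lemma covariance_contamination [MeasurableSingletonClass α] [IsProbabilityMeasure μ]
    (ht0 : 0 ≤ t) (ht1 : t ≤ 1) {X Y : α → ℝ} (hX : MemLp X 2 μ) (hY : MemLp Y 2 μ) :
    cov[X, Y; contamination μ a t] =
      (1 - t) * (cov[X, Y; μ] + t * ((X a - μ[X]) * (Y a - μ[Y]))) := by
  have hmean : ∀ {Z : α → ℝ}, MemLp Z 2 μ →
      (contamination μ a t)[Z] = (1 - t) * μ[Z] + t * Z a :=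
    fun hZ => integral_contamination ht0 ht1 (hZ.integrable one_le_two)
  rw [covariance, integral_contamination (f := fun ω => (X ω - _) * (Y ω - _)) ht0 ht1
      ((hX.sub (memLp_const _)).integrable_mul (hY.sub (memLp_const _))),
    integral_sub_mul_sub_eq_covariance_add hX hY, hmean hX, hmean hY]
  ring

end Contamination

section Regression
variable {Ω n : Type*} [MeasurableSpace Ω] {X : Ω → n → ℝ} {Y : Ω → ℝ} {μ : Measure Ω}

noncomputable def componentMean (X : Ω → n → ℝ) (μ : Measure Ω) : n → ℝ :=
  fun i => μ[fun ω => X ω i]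

noncomputable def covMatrix (X : Ω → n → ℝ) (μ : Measure Ω) : Matrix n n ℝ :=
  Matrix.of fun i j => cov[fun ω => X ω i, fun ω => X ω j; μ]

noncomputable def crossCov (X : Ω → n → ℝ) (Y : Ω → ℝ) (μ : Measure Ω) : n → ℝ :=
  fun i => cov[fun ω => X ω i, Y; μ]

lemma covMatrix_transpose : (covMatrix X μ)ᵀ = covMatrix X μ := by
  ext i j
  exact covariance_comm _ _

lemma covMatrix_eq_of_integral {m : n → ℝ} {V : Matrix n n ℝ}
    (hm : ∀ i, m i = ∫ ω, X ω i ∂μ)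
    (hV : ∀ i j, V i j = ∫ ω, (X ω i - m i) * (X ω j - m j) ∂μ) : covMatrix X μ = V := by
  ext i j
  simp only [hV, hm]
  rfl

lemma crossCov_eq_of_integral {m : n → ℝ} {my : ℝ} {C : n → ℝ} (hm : ∀ i, m i = ∫ ω, X ω i ∂μ)
    (hmy : my = ∫ ω, Y ω ∂μ) (hC : ∀ i, C i = ∫ ω, (X ω i - m i) * (Y ω - my) ∂μ) :
    crossCov X Y μ = C := by
  ext i
  simp only [hC, hm, hmy]
  rfl

section Contaminated
variable [MeasurableSingletonClass Ω] [IsProbabilityMeasure μ] {a : Ω} {t : ℝ}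

lemma covMatrix_contamination (hX : ∀ i, MemLp (fun ω => X ω i) 2 μ) (ht0 : 0 ≤ t)
    (ht1 : t ≤ 1) :
    covMatrix X (contamination μ a t) = (1 - t) • (covMatrix X μ +
      t • vecMulVec (X a - componentMean X μ) (X a - componentMean X μ)) := by
  ext i j
  simp only [covMatrix, of_apply, covariance_contamination ht0 ht1 (hX i) (hX j),
    Matrix.smul_apply, Matrix.add_apply, vecMulVec_apply, smul_eq_mul, Pi.sub_apply,
    componentMean]

lemma crossCov_contamination (hX : ∀ i, MemLp (fun ω => X ω i) 2 μ) (hY : MemLp Y 2 μ)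
    (ht0 : 0 ≤ t) (ht1 : t ≤ 1) :
    crossCov X Y (contamination μ a t) = (1 - t) • (crossCov X Y μ +
      (t * (Y a - μ[Y])) • (X a - componentMean X μ)) := by
  ext i
  simp only [crossCov, covariance_contamination ht0 ht1 (hX i) hY, Pi.smul_apply,
    Pi.add_apply, smul_eq_mul, Pi.sub_apply, componentMean]
  ring

end Contaminated

variable [Fintype n] [DecidableEq n]

noncomputable def regressionSlope (X : Ω → n → ℝ) (Y : Ω → ℝ) (μ : Measure Ω) : n → ℝ :=
  (covMatrix X μ)⁻¹ *ᵥ crossCov X Y μ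

noncomputable def regressionResidual (X : Ω → n → ℝ) (Y : Ω → ℝ) (μ : Measure Ω) (a : Ω) : ℝ :=
  Y a - μ[Y] - regressionSlope X Y μ ⬝ᵥ (X a - componentMean X μ)

noncomputable def mahalanobisSq (X : Ω → n → ℝ) (μ : Measure Ω) (x : n → ℝ) : ℝ :=
  (x - componentMean X μ) ⬝ᵥ ((covMatrix X μ)⁻¹ *ᵥ (x - componentMean X μ))

theorem regressionSlope_contamination [MeasurableSingletonClass Ω] [IsProbabilityMeasure μ]
    {a : Ω} {t : ℝ} (hX : ∀ i, MemLp (fun ω => X ω i) 2 μ)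
    (hY : MemLp Y 2 μ) (hcov : IsUnit (covMatrix X μ).det) (ht0 : 0 ≤ t) (ht1 : t < 1)
    (hq : 1 + t * mahalanobisSq X μ (X a) ≠ 0) :
    regressionSlope X Y (contamination μ a t) = regressionSlope X Y μ +
      (t * regressionResidual X Y μ a / (1 + t * mahalanobisSq X μ (X a))) •
        ((covMatrix X μ)⁻¹ *ᵥ (X a - componentMean X μ)) := by
  rw [regressionSlope, covMatrix_contamination hX ht0 ht1.le,
    crossCov_contamination hX hY ht0 ht1.le, inv_smul_mulVec_smul (sub_ne_zero.2 ht1.ne'),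
    ← vecMulVec_smul, inv_add_vecMulVec_mulVec hcov _ _ _
      (by rwa [smul_dotProduct, smul_eq_mul]), mulVec_add, ← regressionSlope, mulVec_smul,
    dotProduct_add, smul_dotProduct, smul_dotProduct, dotProduct_smul, smul_dotProduct,
    add_sub_assoc, ← sub_smul]
  rw [mahalanobisSq] at hq ⊢
  rw [regressionResidual, dotProduct_comm (regressionSlope X Y μ)]
  congr 2
  simp only [smul_eq_mul]
  field_simp
  ring

end Regression

section Slices
variable {Ω n ι : Type*} [MeasurableSpace Ω] [MeasurableSingletonClass Ω] [Fintype n]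
  [DecidableEq n] [DecidableEq ι]

theorem eventually_regressionSlope_cond_contamination {μ : Measure Ω} [IsFiniteMeasure μ]
    {X : Ω → n → ℝ} {Y : Ω → ℝ} {s : ι → Set Ω} (hs : ∀ h, MeasurableSet (s h))
    (hdisj : Pairwise (Disjoint on s)) {h₀ : ι} {a : Ω} (ha : a ∈ s h₀) (hμs : μ (s h₀) ≠ 0)
    (hX : ∀ i, MemLp (fun ω => X ω i) 2 μ) (hY : MemLp Y 2 μ)
    (hcov : IsUnit (covMatrix X (μ[|s h₀])).det) :
    ∀ᶠ t in 𝓝[≥] 0, ∀ h, regressionSlope X Y ((contamination μ a t)[|s h]) =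
      Function.update (fun h => regressionSlope X Y (μ[|s h])) h₀
        (regressionSlope X Y (μ[|s h₀]) +
          (condWeight (μ.real (s h₀)) t * regressionResidual X Y (μ[|s h₀]) a /
            (1 + condWeight (μ.real (s h₀)) t * mahalanobisSq X (μ[|s h₀]) (X a))) •
          ((covMatrix X (μ[|s h₀]))⁻¹ *ᵥ (X a - componentMean X (μ[|s h₀])))) h := by
  have hw : 0 < μ.real (s h₀) := ENNReal.toReal_pos hμs (measure_ne_top _ _)
  have hsmall : ∀ᶠ t in 𝓝 (0 : ℝ), t < 1 ∧
      1 + condWeight (μ.real (s h₀)) t * mahalanobisSq X (μ[|s h₀]) (X a) ≠ 0 :=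
    (eventually_lt_nhds one_pos).and <| (continuousAt_const.add
      ((hasDerivAt_condWeight hw.ne').continuousAt.mul continuousAt_const)).eventually_ne
        (by simp)
  filter_upwards [self_mem_nhdsWithin, nhdsWithin_le_nhds hsmall] with t (ht0 : 0 ≤ t) ⟨ht1, hq⟩ h
  rcases eq_or_ne h h₀ with rfl | hne
  · have := cond_isProbabilityMeasure hμs
    rw [Function.update_self, cond_contamination_of_mem (hs h) ha hμs ht0 ht1.le,
      regressionSlope_contamination (fun i => (hX i).cond) hY.cond hcov
        (condWeight_nonneg hw ht0 ht1.le) (condWeight_lt_one hw ht0 ht1) hq]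
  · rw [Function.update_of_ne hne,
      cond_contamination_of_notMem (hs h) (Set.disjoint_left.1 (hdisj hne.symm) ha) ht1]

end Slices

lemma hasDerivWithinAt_sum_smul_vecMulVec_update {ι n : Type*} [Fintype ι] [DecidableEq ι]
    (w : ι → ℝ) (b : ι → n → ℝ) (h₀ : ι) (u : n → ℝ) {s : ℝ → ℝ} {s' x : ℝ} {T : Set ℝ}
    (hs : HasDerivWithinAt s s' T x) (hsx : s x = 0) (i j : n) :
    HasDerivWithinAt
      (fun ε => (∑ h, w h • vecMulVec (Function.update b h₀ (b h₀ + s ε • u) h)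
        (Function.update b h₀ (b h₀ + s ε • u) h)) i j)
      (w h₀ * s' * (u i * b h₀ j + b h₀ i * u j)) T x := by
  have hterm : ∀ h, HasDerivWithinAt
      (fun ε => w h * (Function.update b h₀ (b h₀ + s ε • u) h i *
        Function.update b h₀ (b h₀ + s ε • u) h j))
      (if h = h₀ then w h₀ * s' * (u i * b h₀ j + b h₀ i * u j) else 0) T x := by
    intro h
    rcases eq_or_ne h h₀ with rfl | hne
    · simp only [Function.update_self, if_pos, Pi.add_apply, Pi.smul_apply, smul_eq_mul]
      refine ((((hs.mul_const (u i)).const_add (b h i)).mul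
        ((hs.mul_const (u j)).const_add (b h j))).const_mul (w h)).congr_deriv ?_
      rw [hsx]
      ring
    · simp only [Function.update_of_ne hne, if_neg hne]
      exact hasDerivWithinAt_const _ _ _
  have hsum := HasDerivWithinAt.fun_sum (u := Finset.univ) fun h _ => hterm h
  rw [Finset.sum_ite_eq' Finset.univ h₀, if_pos (Finset.mem_univ h₀)] at hsum
  simpa only [Matrix.sum_apply, Matrix.smul_apply, vecMulVec_apply, smul_eq_mul] using hsum

/-- the fixed-slice influence function of the SWAR matrix: under
`ε`-contamination `G_ε = (1−ε)G + ε δ_{(y₀,x₀)}` with `y₀` in the (unique) slice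
`S_{h₀}`, the map `ε ↦ Σ_h w_h b_h(ε) b_h(ε)ᵀ` is right-differentiable at `0` with
derivative `r₀ [Σ_{h₀}⁻¹(x₀ − μ_{h₀}) b_{h₀}ᵀ + b_{h₀} (x₀ − μ_{h₀})ᵀ Σ_{h₀}⁻¹]`,
where `r₀ = y₀ − μ_{y,h₀} − b_{h₀}ᵀ(x₀ − μ_{h₀})`. -/
theorem stmt_19 {p H : ℕ} (G : Measure (ℝ × (Fin p → ℝ))) [IsProbabilityMeasure G]
    (hG2y : MemLp (fun z : ℝ × (Fin p → ℝ) => z.1) 2 G)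
    (hG2x : ∀ i, MemLp (fun z : ℝ × (Fin p → ℝ) => z.2 i) 2 G)
    (y₀ : ℝ) (x₀ : Fin p → ℝ)
    (S : Fin H → Set ℝ) (hS : ∀ h, MeasurableSet (S h))
    (hdisj : Pairwise (Function.onFun Disjoint S))
    (w : Fin H → ℝ) (hw : ∀ h, w h = (G (Prod.fst ⁻¹' S h)).toReal) (hwpos : ∀ h, 0 < w h)
    (h₀ : Fin H) (hy₀ : y₀ ∈ S h₀)
    (μh : Fin H → Fin p → ℝ)
    (hμh : ∀ h i, μh h i = ∫ z, z.2 i ∂(G[|Prod.fst ⁻¹' S h]))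
    (μyh : Fin H → ℝ) (hμyh : ∀ h, μyh h = ∫ z, z.1 ∂(G[|Prod.fst ⁻¹' S h]))
    (Sigh : Fin H → Matrix (Fin p) (Fin p) ℝ)
    (hSigh : ∀ h i j,
      Sigh h i j = ∫ z, (z.2 i - μh h i) * (z.2 j - μh h j) ∂(G[|Prod.fst ⁻¹' S h]))
    (hSighInv : ∀ h, IsUnit (Sigh h).det)
    (Covh : Fin H → Fin p → ℝ)
    (hCovh : ∀ h i,
      Covh h i = ∫ z, (z.2 i - μh h i) * (z.1 - μyh h) ∂(G[|Prod.fst ⁻¹' S h]))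
    (b : Fin H → Fin p → ℝ) (hb : ∀ h, b h = (Sigh h)⁻¹ *ᵥ Covh h)
    (r₀ : ℝ) (hr₀ : r₀ = y₀ - μyh h₀ - b h₀ ⬝ᵥ (x₀ - μh h₀)) :
    ∀ i j, HasDerivWithinAt
      (fun ε : ℝ =>
        let Gε : Measure (ℝ × (Fin p → ℝ)) :=
          ENNReal.ofReal (1 - ε) • G + ENNReal.ofReal ε • Measure.dirac (y₀, x₀)
        let bε : Fin H → Fin p → ℝ := fun h =>
          let Qε := Gε[|Prod.fst ⁻¹' S h]
          let mX : Fin p → ℝ := fun i => ∫ z, z.2 i ∂Qε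
          let mY : ℝ := ∫ z, z.1 ∂Qε
          let V : Matrix (Fin p) (Fin p) ℝ :=
            Matrix.of fun i j => ∫ z, (z.2 i - mX i) * (z.2 j - mX j) ∂Qε
          let C : Fin p → ℝ := fun i => ∫ z, (z.2 i - mX i) * (z.1 - mY) ∂Qε
          V⁻¹ *ᵥ C
        (∑ h, w h • vecMulVec (bε h) (bε h)) i j)
      ((r₀ • (vecMulVec ((Sigh h₀)⁻¹ *ᵥ (x₀ - μh h₀)) (b h₀) +
          vecMulVec (b h₀) ((x₀ - μh h₀) ᵥ* (Sigh h₀)⁻¹))) i j)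
      (Set.Ici 0) 0 := by
  intro i j
  set slice : Fin H → Set (ℝ × (Fin p → ℝ)) := fun h => Prod.fst ⁻¹' S h
  have hcovM : ∀ h, covMatrix Prod.snd (G[|slice h]) = Sigh h :=
    fun h => covMatrix_eq_of_integral (hμh h) (hSigh h)
  have hslope : (fun h => regressionSlope Prod.snd Prod.fst (G[|slice h])) = b := funext fun h => by
    rw [regressionSlope, hcovM, crossCov_eq_of_integral (hμh h) (hμyh h) (hCovh h), hb]
  have hmean : componentMean Prod.snd (G[|slice h₀]) = μh h₀ := funext fun k => (hμh h₀ k).symm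
  have hr : regressionResidual Prod.snd Prod.fst (G[|slice h₀]) (y₀, x₀) = r₀ := by
    rw [hr₀, regressionResidual, congrFun hslope h₀, hmean, hμyh]
  have hpath := eventually_regressionSlope_cond_contamination (s := slice) (X := Prod.snd)
    (Y := Prod.fst) (fun h => measurable_fst (hS h)) (fun h h' hne => (hdisj hne).preimage _)
    (a := (y₀, x₀)) hy₀ (ENNReal.toReal_pos_iff.1 (hw h₀ ▸ hwpos h₀)).1.ne' hG2x hG2y
    (hcovM h₀ ▸ hSighInv h₀)
  rw [hslope, congrFun hslope h₀, hr, measureReal_def, ← hw, mahalanobisSq, hmean, hcovM] at hpath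
  dsimp only at hpath
  set u := (Sigh h₀)⁻¹ *ᵥ (x₀ - μh h₀)
  have hderiv := hasDerivWithinAt_sum_smul_vecMulVec_update (T := Set.Ici 0) w b h₀ u
    (hasDerivAt_condWeight_mul_div (hwpos h₀).ne' r₀ ((x₀ - μh h₀) ⬝ᵥ u)).hasDerivWithinAt
    (by simp) i j
  have hvec : (x₀ - μh h₀) ᵥ* (Sigh h₀)⁻¹ = u := by
    have hsymm : (Sigh h₀)ᵀ = Sigh h₀ := hcovM h₀ ▸ covMatrix_transpose
    rw [← mulVec_transpose, transpose_nonsing_inv, hsymm]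
  change HasDerivWithinAt (fun ε => (∑ h, w h • vecMulVec
    (regressionSlope Prod.snd Prod.fst ((contamination G (y₀, x₀) ε)[|slice h]))
    (regressionSlope Prod.snd Prod.fst ((contamination G (y₀, x₀) ε)[|slice h]))) i j) _ _ _
  refine (hderiv.congr_of_eventuallyEq (hpath.mono fun ε hε => by simp only [hε])
    (by simp only [hpath.self_of_nhdsWithin Set.self_mem_Ici])).congr_deriv ?_
  rw [hvec, mul_div_cancel₀ _ (hwpos h₀).ne']
  simp only [Matrix.smul_apply, Matrix.add_apply, vecMulVec_apply, smul_eq_mul]
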